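/- Let A be an augmented graded algebra over a commutative ring k with augmentation ideal Ā. On the tensor coalgebra TC(Ā), the product obtained by tensorization of the algebra A admits the following combinatorial description: μ([a_1|…|a_p] ⊗ [b_1|…|b_q]) = Σ_σ ± c_σ, where the sum runs over all step-by-step lattice paths σ from (0,0) to (p,q) (paths whose steps increase x by 1, y by 1, or both by 1), c_σ is obtained by placing a_{x_i} for a right step, b_{y_i} for an up step, and the product a_{x_i}b_{y_i} for a diagonal step, and ± is the Koszul sign obtained by mixing the a's and b's. -/

import Mathlib

/-!
STATEMENT 11.  Let `A = k ⊕ Ā` be an augmented graded algebra; we model the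
augmentation ideal `Ā` as the free module on a basis `B` with degrees
`deg : B → ℤ` and product structure constants `m : B → B → (B →₀ k)`
(note `Ā·Ā ⊆ Ā`).  The tensor coalgebra `TC(Ā)` is the free module on words
`List B` with the deconcatenation coproduct.  The product on `TC(Ā)` obtained
by tensorization of the algebra `A` — i.e. the unique morphism of coaugmented
coalgebras `TC(Ā) ⊗ TC(Ā) → TC(Ā)` lifting the composite
`TC(Ā) ⊗ TC(Ā) ↠ A ⊗ A → A` — is given by the step-by-step lattice path
formula: `μ([a₁|…|a_p] ⊗ [b₁|…|b_q]) = Σ_σ ± c_σ`, summing over paths from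
`(0,0)` to `(p,q)` with right, up and diagonal steps, a diagonal step
contributing the product `a_i·b_j`, with Koszul signs.  When the product of
`Ā` is trivial this is the shuffle product.
-/

def sgn (m : ℤ) : ℤ := if Even m then 1 else -1

def degW {B : Type*} (deg : B → ℤ) (l : List B) : ℤ := (l.map deg).sum

/-- The step-by-step path product on words: right steps, up steps (with
Koszul sign) and diagonal steps multiplying the two letters. -/
noncomputable def pathProd (k : Type*) {B : Type*} [CommRing k] (deg : B → ℤ)
    (m : B → B → (B →₀ k)) : List B → List B → (List B →₀ k)
  | [], l => Finsupp.single l 1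
  | a :: x, [] => Finsupp.single (a :: x) 1
  | a :: x, b :: y =>
      (pathProd k deg m x (b :: y)).mapDomain (a :: ·)
      + sgn (deg b * (deg a + degW deg x)) •
          (pathProd k deg m (a :: x) y).mapDomain (b :: ·)
      + sgn (deg b * degW deg x) •
          ((m a b).sum fun c coef =>
            coef • (pathProd k deg m x y).mapDomain (c :: ·))
  termination_by x y => x.length + y.length

/-- The shuffle product (the path product without diagonal steps). -/
noncomputable def shuffle (k : Type*) {B : Type*} [CommRing k] (deg : B → ℤ) :
    List B → List B → (List B →₀ k)
  | [], l => Finsupp.single l 1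
  | a :: x, [] => Finsupp.single (a :: x) 1
  | a :: x, b :: y =>
      (shuffle k deg x (b :: y)).mapDomain (a :: ·)
      + sgn (deg b * (deg a + degW deg x)) •
          (shuffle k deg (a :: x) y).mapDomain (b :: ·)
  termination_by x y => x.length + y.length

noncomputable def deconcat (k : Type*) {B : Type*} [CommRing k] :
    List B → ((List B × List B) →₀ k)
  | [] => Finsupp.single ([], []) 1
  | a :: l => Finsupp.single ([], a :: l) 1
      + (deconcat k l).mapDomain fun p => (a :: p.1, p.2)

noncomputable def deconcatF {k B : Type*} [CommRing k] (f : List B →₀ k) :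
    (List B × List B) →₀ k :=
  f.sum fun l c => c • deconcat k l

/-- A bilinear product on words applied componentwise to pairs, with the
Koszul interchange sign: the product on `TC(Ā) ⊗ TC(Ā)`. -/
noncomputable def pairProd {k B : Type*} [CommRing k] (deg : B → ℤ)
    (μ : List B → List B → (List B →₀ k))
    (f g : (List B × List B) →₀ k) : (List B × List B) →₀ k :=
  f.sum fun p c => g.sum fun q c' =>
    (c * c' * sgn (degW deg p.2 * degW deg q.1)) •
      ((μ p.1 q.1).sum fun u cu => (μ p.2 q.2).sum fun v cv =>
        (cu * cv) • Finsupp.single (u, v) 1)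

/-- The projection `TC(Ā) ⊗ TC(Ā) ↠ A ⊗ A → A` on a pair of basis words,
recorded as an element of `A = k ⊕ Ā` (`none` is the unit coordinate). -/
noncomputable def projMul {k B : Type*} [CommRing k] (m : B → B → (B →₀ k)) :
    List B → List B → (Option B →₀ k)
  | [], [] => Finsupp.single none 1
  | [], [b] => Finsupp.single (some b) 1
  | [a], [] => Finsupp.single (some a) 1
  | [a], [b] => (m a b).mapDomain some
  | _, _ => 0

/-!
Comparing coefficients, a product `μ` on words is a morphism of coalgebras exactly when its
coefficient on a concatenation `u ++ v` is the Koszul-signed sum, over all splittings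
`x = x₁x₂` and `y = y₁y₂`, of the coefficient of `μ x₁ y₁` on `u` times that of `μ x₂ y₂`
on `v`. For the path product this is proved by induction on `u`: reading off the first letter
`c` of `u`, the defining recursion of `pathProd` decomposes a path by its first step (right, up
or diagonal), and this matches the splittings whose first halves are not both empty; the
Koszul signs agree because their exponents are equal as integers. Conversely, since `TC(Ā)` is
cofree, such a morphism is determined by its coefficients on words of length at most one:
peeling off the first letter of a word expresses its coefficient through coefficients on a
letter and on a shorter word. This gives uniqueness.
-/

open Finset
open scoped Classical

@[simp] lemma sgn_zero : sgn 0 = 1 := by simp [sgn]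

lemma sgn_add (a b : ℤ) : sgn (a + b) = sgn a * sgn b := by
  simp only [sgn, Int.even_add]
  by_cases ha : Even a <;> by_cases hb : Even b <;> simp [ha, hb]

lemma sgn_mul_sgn_eq {R : Type*} [Ring R] {a b c d : ℤ} (h : a + b = c + d) :
    (sgn a : R) * sgn b = sgn c * sgn d := by
  rw [← Int.cast_mul, ← Int.cast_mul, ← sgn_add, ← sgn_add, h]

lemma sum_range_sum_range_of_first_step {R : Type*} [CommSemiring R] (n m : ℕ)
    (F G₁ G₂ G₃ : ℕ → ℕ → R) (α β γ : R) (h₀₀ : F 0 0 = 0)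
    (h₀ : ∀ j, F 0 (j + 1) = β * G₂ 0 j) (h₁ : ∀ i, F (i + 1) 0 = α * G₁ i 0)
    (h : ∀ i j, F (i + 1) (j + 1) = α * G₁ i (j + 1) + β * G₂ (i + 1) j + γ * G₃ i j) :
    ∑ i ∈ range (n + 2), ∑ j ∈ range (m + 2), F i j
      = α * ∑ i ∈ range (n + 1), ∑ j ∈ range (m + 2), G₁ i j
        + β * ∑ i ∈ range (n + 2), ∑ j ∈ range (m + 1), G₂ i j
        + γ * ∑ i ∈ range (n + 1), ∑ j ∈ range (m + 1), G₃ i j := by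
  simp only [sum_range_succ' _ (n + 1), sum_range_succ' (fun j => F _ j) (m + 1),
    sum_range_succ' (fun j => G₁ _ j) (m + 1), h₀₀, h₀, h₁, h, sum_add_distrib, mul_add, mul_sum]
  ring

lemma Finsupp.sum_sum_mul_smul_single_apply {k α β : Type*} [CommSemiring k] (f : α →₀ k)
    (g : β →₀ k) (a : α) (b : β) :
    (f.sum fun a' c => g.sum fun b' c' => (c * c') • Finsupp.single (a', b') (1 : k)) (a, b)
      = f a * g b := by
  simp only [Finsupp.sum_apply, Finsupp.smul_apply, Finsupp.single_apply, Prod.mk.injEq,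
    smul_eq_mul, mul_ite, mul_one, mul_zero, ite_and]
  rw [Finsupp.sum_eq_single a (fun a' _ h => by simp [h]) (by simp),
    Finsupp.sum_eq_single b (fun b' _ h => by simp [h]) (by simp)]
  simp

lemma List.take_eq_and_drop_eq_iff {B : Type*} {l u v : List B} {i : ℕ} (hi : i ≤ l.length) :
    l.take i = u ∧ l.drop i = v ↔ l = u ++ v ∧ u.length = i := by
  constructor
  · rintro ⟨rfl, rfl⟩
    simp [hi]
  · rintro ⟨rfl, rfl⟩
    simp

section
variable {k B : Type*} [CommRing k] (deg : B → ℤ) (m : B → B → (B →₀ k))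

@[simp] lemma degW_nil : degW deg [] = 0 := rfl

@[simp] lemma degW_cons (a : B) (l : List B) : degW deg (a :: l) = deg a + degW deg l := by
  simp [degW]

lemma degW_take_add_degW_drop (l : List B) (i : ℕ) :
    degW deg (l.take i) + degW deg (l.drop i) = degW deg l := by
  rw [degW, degW, degW, ← List.sum_append, ← List.map_append, List.take_append_drop]

lemma sum_range_ite_take_drop (l u v : List B) :
    ∑ i ∈ range (l.length + 1), (if l.take i = u ∧ l.drop i = v then (1 : k) else 0)
      = if l = u ++ v then 1 else 0 := by
  have hsplit : ∀ i ∈ range (l.length + 1), l.take i = u ∧ l.drop i = v →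
      l = u ++ v ∧ u.length = i :=
    fun i hi => (List.take_eq_and_drop_eq_iff (Nat.lt_succ_iff.mp (mem_range.mp hi))).1
  split_ifs with h
  · subst h
    rw [sum_eq_single_of_mem u.length (by simp)
      fun i hi hne => if_neg fun hc => hne (hsplit i hi hc).2.symm]
    simp
  · exact sum_eq_zero fun i hi => if_neg fun hc => h (hsplit i hi hc).1

lemma deconcat_eq_sum (l : List B) :
    deconcat k l = ∑ i ∈ range (l.length + 1), Finsupp.single (l.take i, l.drop i) 1 := by
  induction l with
  | nil => simp [deconcat]
  | cons a l ih =>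
    rw [deconcat, ih, Finsupp.mapDomain_finsetSum, List.length_cons,
      sum_range_succ' _ (l.length + 1)]
    simp [Finsupp.mapDomain_single, add_comm]

lemma deconcat_apply (l u v : List B) :
    deconcat k l (u, v) = if l = u ++ v then 1 else 0 := by
  simp only [deconcat_eq_sum, Finsupp.finsetSum_apply, Finsupp.single_apply, Prod.mk.injEq,
    sum_range_ite_take_drop]

lemma deconcat_sum (l : List B) (G : List B × List B → k) :
    ((deconcat k l).sum fun p c => c * G p)
      = ∑ i ∈ range (l.length + 1), G (l.take i, l.drop i) := by
  rw [deconcat_eq_sum, ← Finsupp.sum_finsetSum_index (by simp) (by simp [add_mul])]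
  simp [Finsupp.sum_single_index]

lemma deconcatF_apply (f : List B →₀ k) (u v : List B) : deconcatF f (u, v) = f (u ++ v) := by
  simp [deconcatF, Finsupp.sum_apply, deconcat_apply, eq_comm]

lemma deconcatF_single (l : List B) : deconcatF (Finsupp.single l (1 : k)) = deconcat k l := by
  rw [deconcatF, Finsupp.sum_single_index (by simp), one_smul]

noncomputable def pairCoeff (μ : List B → List B → (List B →₀ k)) (p q : List B × List B)
    (u v : List B) : k :=
  sgn (degW deg p.2 * degW deg q.1) * (μ p.1 q.1 u * μ p.2 q.2 v)

noncomputable def splitSum (μ : List B → List B → (List B →₀ k)) (x y u v : List B) : k :=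
  ∑ i ∈ range (x.length + 1), ∑ j ∈ range (y.length + 1),
    pairCoeff deg μ (x.take i, x.drop i) (y.take j, y.drop j) u v

lemma pairProd_deconcat_apply (μ : List B → List B → (List B →₀ k)) (x y u v : List B) :
    pairProd deg μ (deconcat k x) (deconcat k y) (u, v) = splitSum deg μ x y u v := by
  rw [pairProd, Finsupp.sum_apply, splitSum, ← deconcat_sum x fun p =>
    ∑ j ∈ range (y.length + 1), pairCoeff deg μ p (y.take j, y.drop j) u v]
  refine Finsupp.sum_congr fun p _ => ?_
  rw [Finsupp.sum_apply, ← deconcat_sum y fun q => pairCoeff deg μ p q u v, Finsupp.mul_sum]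
  refine Finsupp.sum_congr fun q _ => ?_
  rw [Finsupp.smul_apply, Finsupp.sum_sum_mul_smul_single_apply, pairCoeff, smul_eq_mul]
  ring

def IsCoalgHom (μ : List B → List B → (List B →₀ k)) : Prop :=
  ∀ x y u v, μ x y (u ++ v) = splitSum deg μ x y u v

lemma forall_deconcatF_eq_pairProd_iff (μ : List B → List B → (List B →₀ k)) :
    (∀ x y, deconcatF (μ x y) = pairProd deg μ (deconcatF (Finsupp.single x 1))
        (deconcatF (Finsupp.single y 1))) ↔ IsCoalgHom deg μ := by
  simp only [IsCoalgHom, deconcatF_single, Finsupp.ext_iff, Prod.forall, deconcatF_apply,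
    pairProd_deconcat_apply]

variable {deg} in
lemma IsCoalgHom.ext {μ ν : List B → List B → (List B →₀ k)} (hμ : IsCoalgHom deg μ)
    (hν : IsCoalgHom deg ν) (h₀ : ∀ x y, μ x y [] = ν x y [])
    (h₁ : ∀ x y c, μ x y [c] = ν x y [c]) : μ = ν := by
  funext x y
  ext w
  induction w generalizing x y with
  | nil => exact h₀ x y
  | cons c w ih =>
    rw [← List.singleton_append, hμ, hν]
    exact sum_congr rfl fun i _ => sum_congr rfl fun j _ => by rw [pairCoeff, pairCoeff, h₁, ih]

lemma splitSum_nil {μ : List B → List B → (List B →₀ k)}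
    (hμ : ∀ x y, μ x y [] = if x = [] ∧ y = [] then 1 else 0) (x y v : List B) :
    splitSum deg μ x y [] v = μ x y v := by
  have htake : ∀ (l : List B) i, i ∈ range (l.length + 1) → i ≠ 0 → l.take i ≠ [] := by
    intro l i hi h0
    rw [Ne, List.take_eq_nil_iff, not_or]
    exact ⟨h0, fun hl => h0 (by simpa [hl] using hi)⟩
  rw [splitSum, sum_eq_single_of_mem 0 (by simp) fun i hi h0 => sum_eq_zero fun j _ => by
      simp [pairCoeff, hμ, htake x i hi h0],
    sum_eq_single_of_mem 0 (by simp) fun j hj h0 => by simp [pairCoeff, hμ, htake y j hj h0]]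
  simp [pairCoeff, hμ]

lemma single_cons_apply_cons (b c : B) (y w : List B) :
    Finsupp.single (b :: y) (1 : k) (c :: w) = (if c = b then 1 else 0) * Finsupp.single y 1 w := by
  by_cases h : c = b <;> simp [Finsupp.single_apply, h]

lemma mapDomain_cons_apply_nil (f : List B →₀ k) (a : B) : f.mapDomain (a :: ·) [] = 0 :=
  Finsupp.mapDomain_of_notMem_range _ _ (by simp)

lemma mapDomain_cons_apply_cons (f : List B →₀ k) (a c : B) (w : List B) :
    f.mapDomain (a :: ·) (c :: w) = (if c = a then 1 else 0) * f w := by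
  by_cases h : c = a
  · subst h
    simp [Finsupp.mapDomain_apply List.cons_injective]
  · simp [h, Finsupp.mapDomain_of_notMem_range, Ne.symm h]

lemma pathProd_nil_left (y : List B) : pathProd k deg m [] y = Finsupp.single y 1 := by
  rw [pathProd]

lemma pathProd_nil_right (x : List B) : pathProd k deg m x [] = Finsupp.single x 1 := by
  cases x <;> rw [pathProd]

lemma pathProd_apply_nil (x y : List B) :
    pathProd k deg m x y [] = if x = [] ∧ y = [] then 1 else 0 := by
  match x, y with
  | [], y => cases y <;> simp [pathProd_nil_left]
  | _ :: _, [] => simp [pathProd_nil_right]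
  | _ :: _, _ :: _ =>
    rw [pathProd]
    simp only [Finsupp.add_apply, Finsupp.smul_apply, Finsupp.sum_apply, mapDomain_cons_apply_nil]
    simp

lemma pathProd_cons_cons_apply_cons (a b c : B) (x y w : List B) :
    pathProd k deg m (a :: x) (b :: y) (c :: w)
      = (if c = a then 1 else 0) * pathProd k deg m x (b :: y) w
        + sgn (deg b * (deg a + degW deg x)) * (if c = b then 1 else 0) *
            pathProd k deg m (a :: x) y w
        + sgn (deg b * degW deg x) * m a b c * pathProd k deg m x y w := by
  rw [pathProd]
  simp only [Finsupp.add_apply, Finsupp.smul_apply, Finsupp.sum_apply, mapDomain_cons_apply_cons,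
    zsmul_eq_mul, smul_eq_mul]
  rw [Finsupp.sum_eq_single c (fun c' _ h => by simp [Ne.symm h]) (by simp), if_pos rfl]
  ring

lemma pathProd_nil_left_apply_append (y u v : List B) :
    pathProd k deg m [] y (u ++ v) = splitSum deg (pathProd k deg m) [] y u v := by
  simp only [splitSum, pairCoeff, List.length_nil, zero_add, sum_range_one, List.take_nil,
    List.drop_nil, degW_nil, zero_mul, sgn_zero, Int.cast_one, one_mul, pathProd_nil_left,
    Finsupp.single_apply, ite_zero_mul_ite_zero, mul_one, sum_range_ite_take_drop]

lemma pathProd_nil_right_apply_append (x u v : List B) :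
    pathProd k deg m x [] (u ++ v) = splitSum deg (pathProd k deg m) x [] u v := by
  simp only [splitSum, pairCoeff, List.length_nil, zero_add, sum_range_one, List.take_nil,
    List.drop_nil, degW_nil, mul_zero, sgn_zero, Int.cast_one, one_mul, pathProd_nil_right,
    Finsupp.single_apply, ite_zero_mul_ite_zero, mul_one, sum_range_ite_take_drop]

lemma pathProd_cons_cons_apply_cons_append (a b c : B) (x y u v : List B)
    (ih : ∀ x y, pathProd k deg m x y (u ++ v) = splitSum deg (pathProd k deg m) x y u v) :
    pathProd k deg m (a :: x) (b :: y) (c :: u ++ v)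
      = splitSum deg (pathProd k deg m) (a :: x) (b :: y) (c :: u) v := by
  rw [List.cons_append, pathProd_cons_cons_apply_cons, ih, ih, ih]
  simp only [splitSum, List.length_cons]
  symm
  apply sum_range_sum_range_of_first_step
  · simp [pairCoeff, pathProd_nil_left]
  · intro j
    simp only [pairCoeff, List.take_zero, List.drop_zero, List.take_succ_cons, List.drop_succ_cons,
      pathProd_nil_left, single_cons_apply_cons, degW_cons]
    rw [mul_add (deg a + degW deg x), sgn_add, Int.cast_mul,
      mul_comm (deg a + degW deg x) (deg b)]
    ring
  · intro i
    simp only [pairCoeff, List.take_zero, List.drop_zero, List.take_succ_cons, List.drop_succ_cons,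
      pathProd_nil_right, single_cons_apply_cons]
    ring
  · intro i j
    simp only [pairCoeff, List.take_succ_cons, List.drop_succ_cons, pathProd_cons_cons_apply_cons,
      degW_cons]
    have hx := degW_take_add_degW_drop deg x i
    have hs₁ := sgn_mul_sgn_eq (R := k)
      (a := degW deg (x.drop i) * (deg b + degW deg (y.take j)))
      (b := deg b * (deg a + degW deg (x.take i)))
      (c := deg b * (deg a + degW deg x)) (d := degW deg (x.drop i) * degW deg (y.take j))
      (by linear_combination deg b * hx)
    have hs₂ := sgn_mul_sgn_eq (R := k)
      (a := degW deg (x.drop i) * (deg b + degW deg (y.take j)))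
      (b := deg b * degW deg (x.take i))
      (c := deg b * degW deg x) (d := degW deg (x.drop i) * degW deg (y.take j))
      (by linear_combination deg b * hx)
    linear_combination
      ((if c = b then 1 else 0) * pathProd k deg m (a :: x.take i) (y.take j) u *
        pathProd k deg m (x.drop i) (y.drop j) v) * hs₁
      + (m a b c * pathProd k deg m (x.take i) (y.take j) u *
        pathProd k deg m (x.drop i) (y.drop j) v) * hs₂

lemma isCoalgHom_pathProd : IsCoalgHom deg (pathProd k deg m) := by
  intro x y u v
  induction u generalizing x y with
  | nil => rw [List.nil_append, splitSum_nil deg (pathProd_apply_nil deg m)]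
  | cons c u ih =>
    match x, y with
    | [], y => exact pathProd_nil_left_apply_append deg m y _ v
    | a :: x, [] => exact pathProd_nil_right_apply_append deg m _ _ v
    | a :: x, b :: y => exact pathProd_cons_cons_apply_cons_append deg m a b c x y u v ih

lemma projMul_apply_none (x y : List B) :
    projMul m x y none = if x = [] ∧ y = [] then 1 else 0 := by
  rcases x with _ | ⟨a, _ | ⟨a', x⟩⟩ <;> rcases y with _ | ⟨b, _ | ⟨b', y⟩⟩ <;>
    simp [projMul, Finsupp.mapDomain_of_notMem_range]

lemma pathProd_apply_singleton (x y : List B) (c : B) :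
    pathProd k deg m x y [c] = projMul m x y (some c) := by
  rcases x with _ | ⟨a, _ | ⟨a', x⟩⟩ <;> rcases y with _ | ⟨b, _ | ⟨b', y⟩⟩ <;>
    simp [projMul, pathProd_nil_left, pathProd_nil_right, pathProd_cons_cons_apply_cons,
      pathProd_apply_nil, Finsupp.single_apply, Finsupp.mapDomain_apply (Option.some_injective B)]

lemma pathProd_eq_shuffle (hm : ∀ a b, m a b = 0) : pathProd k deg m = shuffle k deg := by
  funext x y
  induction x generalizing y with
  | nil => rw [pathProd, shuffle]
  | cons a x ihx =>
    induction y with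
    | nil => rw [pathProd, shuffle]
    | cons b y ihy =>
      rw [pathProd, shuffle, ihx, ihy, hm, Finsupp.sum_zero_index, smul_zero, add_zero]

end

theorem tensorization_product_is_path_product_general (k B : Type*) [CommRing k]
    (deg : B → ℤ) (m : B → B → (B →₀ k)) :
    -- the path product is a morphism of coalgebras …
    (∀ x y : List B,
      deconcatF (pathProd k deg m x y)
        = pairProd deg (pathProd k deg m) (deconcatF (Finsupp.single x 1))
            (deconcatF (Finsupp.single y 1))) ∧
    -- … which lifts the multiplication of `A`
    (∀ x y : List B,
      (pathProd k deg m x y) [] = (projMul m x y) none ∧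
      ∀ c : B, (pathProd k deg m x y) [c] = (projMul m x y) (some c)) ∧
    -- and it is the unique such bilinear product
    (∀ μ : List B → List B → (List B →₀ k),
      (∀ x y : List B,
        deconcatF (μ x y) = pairProd deg μ (deconcatF (Finsupp.single x 1))
          (deconcatF (Finsupp.single y 1))) →
      (∀ x y : List B,
        (μ x y) [] = (projMul m x y) none ∧
        ∀ c : B, (μ x y) [c] = (projMul m x y) (some c)) →
      μ = pathProd k deg m) ∧
    -- when the product of `Ā` is trivial, it is the shuffle product
    ((∀ a b, m a b = 0) → pathProd k deg m = shuffle k deg) := by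
  have hlift : ∀ x y : List B, pathProd k deg m x y [] = projMul m x y none ∧
      ∀ c, pathProd k deg m x y [c] = projMul m x y (some c) := fun x y =>
    ⟨by rw [pathProd_apply_nil, projMul_apply_none], pathProd_apply_singleton deg m x y⟩
  refine ⟨(forall_deconcatF_eq_pairProd_iff deg _).2 (isCoalgHom_pathProd deg m), hlift,
    fun μ hμ hμlift => ?_, pathProd_eq_shuffle deg m⟩
  refine ((forall_deconcatF_eq_pairProd_iff deg μ).1 hμ).ext (isCoalgHom_pathProd deg m)
    (fun x y => ?_) (fun x y c => ?_)
  · rw [(hμlift x y).1, (hlift x y).1]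
  · rw [(hμlift x y).2 c, (hlift x y).2 c]

theorem tensorization_product_is_path_product (k B : Type*) [CommRing k]
    (deg : B → ℤ) (m : B → B → (B →₀ k))
    -- the product of `Ā` respects degrees
    (hm : ∀ a b c, c ∈ (m a b).support → deg c = deg a + deg b) :
    -- the path product is a morphism of coalgebras …
    (∀ x y : List B,
      deconcatF (pathProd k deg m x y)
        = pairProd deg (pathProd k deg m) (deconcatF (Finsupp.single x 1))
            (deconcatF (Finsupp.single y 1))) ∧
    -- … which lifts the multiplication of `A`
    (∀ x y : List B,
      (pathProd k deg m x y) [] = (projMul m x y) none ∧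
      ∀ c : B, (pathProd k deg m x y) [c] = (projMul m x y) (some c)) ∧
    -- and it is the unique such bilinear product
    (∀ μ : List B → List B → (List B →₀ k),
      (∀ x y : List B,
        deconcatF (μ x y) = pairProd deg μ (deconcatF (Finsupp.single x 1))
          (deconcatF (Finsupp.single y 1))) →
      (∀ x y : List B,
        (μ x y) [] = (projMul m x y) none ∧
        ∀ c : B, (μ x y) [c] = (projMul m x y) (some c)) →
      μ = pathProd k deg m) ∧
    -- when the product of `Ā` is trivial, it is the shuffle product
    ((∀ a b, m a b = 0) → pathProd k deg m = shuffle k deg) :=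
  tensorization_product_is_path_product_general k B deg m
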